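/- Let R be a unital ring, n ≥ 2, M a 2-torsion free unital Mₙ(R)-bimodule, and Δ : Mₙ(R) → M an additive map satisfying: AB = BA = 0 implies Δ(A)B + AΔ(B) + Δ(B)A + BΔ(A) = 0, with EΔ(E)F = FΔ(E)E = 0 where E = E₁₁ and F = 1 - E₁₁. Then for every A ∈ Mₙ(R), Δ(FAE) = FΔ(FAE)E. -/

import Mathlib

/-- A (not necessarily unital) bimodule structure of a ring `A` on an
additive group `M`, given by a left action `l` and a right action `r`. -/
structure RingBimod (A M : Type*) [Ring A] [AddCommGroup M] where
  l : A → M → M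
  r : M → A → M
  l_add : ∀ a m₁ m₂, l a (m₁ + m₂) = l a m₁ + l a m₂
  add_l : ∀ a₁ a₂ m, l (a₁ + a₂) m = l a₁ m + l a₂ m
  r_add : ∀ m₁ m₂ a, r (m₁ + m₂) a = r m₁ a + r m₂ a
  add_r : ∀ m a₁ a₂, r m (a₁ + a₂) = r m a₁ + r m a₂
  mul_l : ∀ a₁ a₂ m, l (a₁ * a₂) m = l a₁ (l a₂ m)
  r_mul : ∀ m a₁ a₂, r m (a₁ * a₂) = r (r m a₁) a₂
  l_r : ∀ a₁ m a₂, l a₁ (r m a₂) = r (l a₁ m) a₂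

/-!
Write `e = E₁₁` and `f = 1 - e`. By additivity it suffices to treat `Δ(x w)` with `x ∈ fAe`
having a left inverse `y ∈ eAf` (`y x = e`) and `w ∈ eAe`: the matrix units `E_{i1}`, `i ≠ 1`,
times `c E₁₁` span `fAe`. Applying the defining identity to the orthogonal pairs `(e, f)`, `(x, x)`,
`(x, f - xy)`, `(w, f)` and `(w + xw, x - f)`, and multiplying by suitable elements on both
sides, kills the Peirce component `e Δ(xw) f`. The pair `(e - xw, f + xw)` then kills
`e Δ(xw) e` and `f Δ(xw) f`, using that `M` is 2-torsion free, so `Δ(xw) = f Δ(xw) e`.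
-/

theorem mul_self_eq_zero_of_mul_eq_self_of_mul_eq_zero {A : Type*} [Ring A] {e x : A}
    (hxe : x * e = x) (hex : e * x = 0) : x * x = 0 := by
  nth_rw 1 [← hxe]
  rw [mul_assoc, hex, mul_zero]

theorem IsIdempotentElem.orthogonal_sub_one_sub_add {A : Type*} [Ring A] {e x : A}
    (he : IsIdempotentElem e) (hxe : x * e = x) (hex : e * x = 0) :
    (e - x) * (1 - e + x) = 0 ∧ (1 - e + x) * (e - x) = 0 := by
  have hxx := mul_self_eq_zero_of_mul_eq_self_of_mul_eq_zero hxe hex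
  constructor
  · rw [sub_mul, mul_add, mul_add, he.mul_one_sub_self, hex, mul_sub, mul_one, hxe, hxx]
    abel
  · rw [add_mul, mul_sub, mul_sub, he.one_sub_mul_self, sub_mul, one_mul, hex, hxe, hxx]
    abel

namespace RingBimod

variable {A M : Type*} [Ring A] [AddCommGroup M] (bm : RingBimod A M)

theorem l_zero (a : A) : bm.l a 0 = 0 := (AddMonoidHom.mk' (bm.l a) (bm.l_add a)).map_zero

theorem zero_l (m : M) : bm.l 0 m = 0 := (AddMonoidHom.mk' (bm.l · m) (bm.add_l · · m)).map_zero

theorem r_zero (m : M) : bm.r m 0 = 0 := (AddMonoidHom.mk' (bm.r m) (bm.add_r m)).map_zero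

theorem zero_r (a : A) : bm.r 0 a = 0 := (AddMonoidHom.mk' (bm.r · a) (bm.r_add · · a)).map_zero

theorem l_neg (a : A) (m : M) : bm.l a (-m) = -bm.l a m :=
  (AddMonoidHom.mk' (bm.l a) (bm.l_add a)).map_neg m

theorem neg_l (a : A) (m : M) : bm.l (-a) m = -bm.l a m :=
  (AddMonoidHom.mk' (bm.l · m) (bm.add_l · · m)).map_neg a

theorem r_neg (m : M) (a : A) : bm.r (-m) a = -bm.r m a :=
  (AddMonoidHom.mk' (bm.r · a) (bm.r_add · · a)).map_neg m

theorem neg_r (m : M) (a : A) : bm.r m (-a) = -bm.r m a :=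
  (AddMonoidHom.mk' (bm.r m) (bm.add_r m)).map_neg a

theorem l_sub (a : A) (m₁ m₂ : M) : bm.l a (m₁ - m₂) = bm.l a m₁ - bm.l a m₂ :=
  (AddMonoidHom.mk' (bm.l a) (bm.l_add a)).map_sub m₁ m₂

theorem r_sub (m₁ m₂ : M) (a : A) : bm.r (m₁ - m₂) a = bm.r m₁ a - bm.r m₂ a :=
  (AddMonoidHom.mk' (bm.r · a) (bm.r_add · · a)).map_sub m₁ m₂

theorem sub_r (m : M) (a₁ a₂ : A) : bm.r m (a₁ - a₂) = bm.r m a₁ - bm.r m a₂ :=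
  (AddMonoidHom.mk' (bm.r m) (bm.add_r m)).map_sub a₁ a₂

theorem l_r_mul_left_eq_zero {p m q : A} {x : M} (h : bm.l p (bm.r x q) = 0) :
    bm.l (m * p) (bm.r x q) = 0 := by
  rw [bm.mul_l, h, bm.l_zero]

theorem l_r_mul_right_eq_zero {p q m : A} {x : M} (h : bm.l p (bm.r x q) = 0) :
    bm.l p (bm.r x (q * m)) = 0 := by
  rw [bm.r_mul, bm.l_r, h, bm.zero_r]

/-- The corner `p M q`, when `p` and `q` are idempotent. -/
def corner (p q : A) : AddSubgroup M where
  carrier := {x | bm.l p (bm.r x q) = x}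
  add_mem' {x y} hx hy := by simp_all only [Set.mem_ofPred_eq, bm.r_add, bm.l_add]
  zero_mem' := by simp only [Set.mem_ofPred_eq, bm.zero_r, bm.l_zero]
  neg_mem' {x} hx := by simp_all only [Set.mem_ofPred_eq, bm.r_neg, bm.l_neg]

theorem mem_corner_of_eq_zero (hunit : ∀ x : M, bm.l 1 x = x ∧ bm.r x 1 = x) {e : A} {x : M}
    (hee : bm.l e (bm.r x e) = 0) (hef : bm.l e (bm.r x (1 - e)) = 0)
    (hff : bm.l (1 - e) (bm.r x (1 - e)) = 0) : x ∈ bm.corner (1 - e) e := by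
  have h1 : (1 : A) = e + (1 - e) := (add_sub_cancel e 1).symm
  calc bm.l (1 - e) (bm.r x e)
      = bm.l (e + (1 - e)) (bm.r x (e + (1 - e))) := by
        simp only [bm.add_l, bm.add_r, bm.l_add, hee, hef, hff, zero_add, add_zero]
    _ = x := by rw [← h1, (hunit x).2, (hunit x).1]

def JordanDerivableAtOrthogonal (Δ : A →+ M) : Prop :=
  ∀ a b, a * b = 0 → b * a = 0 →
    bm.r (Δ a) b + bm.l a (Δ b) + bm.r (Δ b) a + bm.l b (Δ a) = 0

namespace JordanDerivableAtOrthogonal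

variable {bm} {Δ : A →+ M}

theorem sandwich_eq_zero (hΔ : bm.JordanDerivableAtOrthogonal Δ) {a b : A} (hab : a * b = 0)
    (hba : b * a = 0) (p q : A) :
    bm.l p (bm.r (Δ a) (b * q)) + bm.l (p * a) (bm.r (Δ b) q) +
      bm.l p (bm.r (Δ b) (a * q)) + bm.l (p * b) (bm.r (Δ a) q) = 0 := by
  have h := congrArg (fun x => bm.l p (bm.r x q)) (hΔ a b hab hba)
  simpa only [bm.r_add, bm.l_add, ← bm.l_r, ← bm.r_mul, ← bm.mul_l, bm.zero_r, bm.l_zero]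
    using h

theorem peirce_ee_delta_one_sub_eq_zero (hΔ : bm.JordanDerivableAtOrthogonal Δ)
    (htf : ∀ x : M, x + x = 0 → x = 0) {e : A} (he : IsIdempotentElem e) :
    bm.l e (bm.r (Δ (1 - e)) e) = 0 := by
  have h := hΔ.sandwich_eq_zero he.mul_one_sub_self he.one_sub_mul_self e e
  simp only [he.eq, he.mul_one_sub_self, he.one_sub_mul_self, bm.zero_l, bm.r_zero, bm.l_zero,
    zero_add, add_zero] at h
  exact htf _ h

theorem peirce_ff_delta_self_eq_zero (hΔ : bm.JordanDerivableAtOrthogonal Δ)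
    (htf : ∀ x : M, x + x = 0 → x = 0) {e : A} (he : IsIdempotentElem e) :
    bm.l (1 - e) (bm.r (Δ e) (1 - e)) = 0 := by
  have h := hΔ.sandwich_eq_zero he.mul_one_sub_self he.one_sub_mul_self (1 - e) (1 - e)
  simp only [he.one_sub.eq, he.mul_one_sub_self, he.one_sub_mul_self, bm.zero_l, bm.r_zero,
    bm.l_zero, add_zero] at h
  exact htf _ h

theorem peirce_ef_delta_one_sub_eq_zero (hΔ : bm.JordanDerivableAtOrthogonal Δ) {e : A}
    (he : IsIdempotentElem e) (hΔe : bm.l e (bm.r (Δ e) (1 - e)) = 0) :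
    bm.l e (bm.r (Δ (1 - e)) (1 - e)) = 0 := by
  have h := hΔ.sandwich_eq_zero he.mul_one_sub_self he.one_sub_mul_self e (1 - e)
  simpa only [he.eq, he.one_sub.eq, he.mul_one_sub_self, hΔe, bm.zero_l, bm.r_zero, bm.l_zero,
    zero_add, add_zero] using h

theorem l_r_delta_eq_zero_of_orthogonal_idempotent (hΔ : bm.JordanDerivableAtOrthogonal Δ)
    {e a b : A} (hab : a * b = 0) (hba : b * a = 0) (hea : e * a = 0) (heb : e * b = 0)
    (hb : IsIdempotentElem b) : bm.l e (bm.r (Δ a) b) = 0 := by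
  have h := hΔ.sandwich_eq_zero hab hba e b
  simpa only [hb.eq, hab, hea, heb, bm.zero_l, bm.r_zero, bm.l_zero, add_zero] using h

theorem l_r_delta_mul_eq_zero_of_mul_self_eq_zero (hΔ : bm.JordanDerivableAtOrthogonal Δ)
    (htf : ∀ x : M, x + x = 0 → x = 0) {e x : A} (hxx : x * x = 0) (hex : e * x = 0) (y : A) :
    bm.l e (bm.r (Δ x) (x * y)) = 0 := by
  have h := hΔ.sandwich_eq_zero hxx hxx e y
  simp only [hex, bm.zero_l, add_zero] at h
  exact htf _ h

theorem peirce_ef_delta_eq_zero_of_left_inverse (hΔ : bm.JordanDerivableAtOrthogonal Δ)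
    (htf : ∀ x : M, x + x = 0 → x = 0) {e x y : A} (he : IsIdempotentElem e)
    (hxe : x * e = x) (hex : e * x = 0) (hyx : y * x = e) (hye : y * e = 0) :
    bm.l e (bm.r (Δ x) (1 - e)) = 0 := by
  have hxx := mul_self_eq_zero_of_mul_eq_self_of_mul_eq_zero hxe hex
  have hxy : IsIdempotentElem (x * y) := by
    rw [IsIdempotentElem, mul_assoc, ← mul_assoc y, hyx, ← mul_assoc, hxe]
  have hxy_f : x * y * (1 - e) = x * y := by
    rw [mul_sub, mul_one, mul_assoc, hye, mul_zero, sub_zero]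
  have hf_xy : (1 - e) * (x * y) = x * y := by
    rw [sub_mul, one_mul, ← mul_assoc, hex, zero_mul, sub_zero]
  have hg := hxy.sub he.one_sub hxy_f hf_xy
  have hxg : x * (1 - e - x * y) = 0 := by
    rw [mul_sub, mul_sub, mul_one, hxe, ← mul_assoc, hxx, zero_mul, sub_self, sub_zero]
  have hgx : (1 - e - x * y) * x = 0 := by
    rw [sub_mul, sub_mul, one_mul, hex, mul_assoc, hyx, hxe, sub_zero, sub_self]
  have heg : e * (1 - e - x * y) = 0 := by
    rw [mul_sub, he.mul_one_sub_self, ← mul_assoc, hex, zero_mul, sub_zero]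
  -- `1 - e` is the sum of the idempotent `xy` and the idempotent `1 - e - xy` orthogonal to `x`
  calc bm.l e (bm.r (Δ x) (1 - e))
      = bm.l e (bm.r (Δ x) (x * y)) + bm.l e (bm.r (Δ x) (1 - e - x * y)) := by
        rw [← bm.l_add, ← bm.add_r, add_sub_cancel]
    _ = 0 := by
        rw [hΔ.l_r_delta_mul_eq_zero_of_mul_self_eq_zero htf hxx hex,
          hΔ.l_r_delta_eq_zero_of_orthogonal_idempotent hxg hgx hex heg hg, zero_add]

theorem peirce_ef_delta_eq_zero_of_mem_ee (hΔ : bm.JordanDerivableAtOrthogonal Δ) {e w : A}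
    (he : IsIdempotentElem e) (hff : bm.l e (bm.r (Δ (1 - e)) (1 - e)) = 0) (hew : e * w = w)
    (hwe : w * e = w) : bm.l e (bm.r (Δ w) (1 - e)) = 0 := by
  have hwf : w * (1 - e) = 0 := by rw [mul_sub, mul_one, hwe, sub_self]
  have hfw : (1 - e) * w = 0 := by rw [sub_mul, one_mul, hew, sub_self]
  have h := hΔ.sandwich_eq_zero hwf hfw e (1 - e)
  rw [hew, ← hwe, bm.l_r_mul_left_eq_zero hff] at h
  simpa only [he.one_sub.eq, he.mul_one_sub_self, hwe, hwf, bm.zero_l, bm.r_zero, bm.l_zero,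
    add_zero] using h

theorem peirce_ef_delta_mul_eq_zero (hΔ : bm.JordanDerivableAtOrthogonal Δ) {e x w : A}
    (he : IsIdempotentElem e) (hxe : x * e = x) (hex : e * x = 0) (hew : e * w = w)
    (hwe : w * e = w) (hff : bm.l e (bm.r (Δ (1 - e)) (1 - e)) = 0)
    (hx : bm.l e (bm.r (Δ x) (1 - e)) = 0) (hw : bm.l e (bm.r (Δ w) (1 - e)) = 0) :
    bm.l e (bm.r (Δ (x * w)) (1 - e)) = 0 := by
  have hxf : x * (1 - e) = 0 := by rw [mul_sub, mul_one, hxe, sub_self]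
  have hfx : (1 - e) * x = x := by rw [sub_mul, one_mul, hex, sub_zero]
  have hwf : w * (1 - e) = 0 := by rw [mul_sub, mul_one, hwe, sub_self]
  have hfw : (1 - e) * w = 0 := by rw [sub_mul, one_mul, hew, sub_self]
  have hwx : w * x = 0 := by rw [← hwe, mul_assoc, hex, mul_zero]
  have hxx := mul_self_eq_zero_of_mul_eq_self_of_mul_eq_zero hxe hex
  have hwx_f : (w + x * w) * (1 - e) = 0 := by rw [add_mul, mul_assoc, hwf, mul_zero, add_zero]
  have h₁ : (w + x * w) * (x - (1 - e)) = 0 := by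
    rw [mul_sub, hwx_f, sub_zero, add_mul, mul_assoc, hwx, mul_zero, add_zero]
  have h₂ : (x - (1 - e)) * (w + x * w) = 0 := by
    rw [sub_mul, mul_add, mul_add, ← mul_assoc x x, hxx, zero_mul, add_zero, hfw, zero_add,
      ← mul_assoc, hfx, sub_self]
  have hwΔx : bm.l w (bm.r (Δ x) (1 - e)) = 0 := by
    rw [← hwe]; exact bm.l_r_mul_left_eq_zero hx
  have hwΔf : bm.l w (bm.r (Δ (1 - e)) (1 - e)) = 0 := by
    rw [← hwe]; exact bm.l_r_mul_left_eq_zero hff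
  -- sandwiching the identity for this orthogonal pair between `e` and `1 - e` isolates
  -- `e Δ(xw) (1 - e)`, since `e (w + xw) = w`
  have h := hΔ.sandwich_eq_zero h₁ h₂ e (1 - e)
  rw [sub_mul, hxf, he.one_sub.eq, zero_sub, mul_add, hew, ← mul_assoc, hex, zero_mul, add_zero,
    hwx_f, mul_sub, hex, he.mul_one_sub_self, sub_zero, map_add, map_sub] at h
  simpa only [bm.neg_r, bm.r_add, bm.r_sub, bm.l_neg, bm.l_add, bm.l_sub, bm.r_zero, bm.l_zero,
    bm.zero_l, hw, hwΔx, hwΔf, sub_zero, add_zero, zero_add, neg_eq_zero] using h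

theorem peirce_ee_delta_eq_zero_of_mem_fe (hΔ : bm.JordanDerivableAtOrthogonal Δ)
    (htf : ∀ x : M, x + x = 0 → x = 0) {e x : A} (he : IsIdempotentElem e) (hxe : x * e = x)
    (hex : e * x = 0) (hΔe : bm.l e (bm.r (Δ e) (1 - e)) = 0)
    (hff : bm.l e (bm.r (Δ (1 - e)) (1 - e)) = 0) (hx : bm.l e (bm.r (Δ x) (1 - e)) = 0) :
    bm.l e (bm.r (Δ x) e) = 0 := by
  obtain ⟨h₁, h₂⟩ := he.orthogonal_sub_one_sub_add hxe hex
  have hfx : (1 - e) * x = x := by rw [sub_mul, one_mul, hex, sub_zero]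
  have hkill : ∀ m, bm.l e (bm.r m (1 - e)) = 0 → bm.l e (bm.r m x) = 0 :=
    fun m h ↦ hfx ▸ bm.l_r_mul_right_eq_zero h
  have h := hΔ.sandwich_eq_zero h₁ h₂ e e
  rw [add_mul, he.one_sub_mul_self, zero_add, hxe, mul_sub, he.eq, hex, sub_zero, sub_mul, he.eq,
    mul_add, he.mul_one_sub_self, zero_add, hex, map_sub, map_add] at h
  simp only [hxe, hkill _ hΔe, hkill _ hff, hkill _ hx, hΔ.peirce_ee_delta_one_sub_eq_zero htf he,
    bm.r_add, bm.r_sub, bm.l_add, bm.l_sub, bm.zero_l, bm.sub_r, add_zero, zero_add, sub_zero] at h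
  exact htf _ h

theorem peirce_ff_delta_eq_zero_of_mem_fe (hΔ : bm.JordanDerivableAtOrthogonal Δ)
    (htf : ∀ x : M, x + x = 0 → x = 0) {e x : A} (he : IsIdempotentElem e) (hxe : x * e = x)
    (hex : e * x = 0) (hΔe : bm.l e (bm.r (Δ e) (1 - e)) = 0)
    (hff : bm.l e (bm.r (Δ (1 - e)) (1 - e)) = 0) (hx : bm.l e (bm.r (Δ x) (1 - e)) = 0) :
    bm.l (1 - e) (bm.r (Δ x) (1 - e)) = 0 := by
  obtain ⟨h₁, h₂⟩ := he.orthogonal_sub_one_sub_add hxe hex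
  have hxf : x * (1 - e) = 0 := by rw [mul_sub, mul_one, hxe, sub_self]
  have hfx : (1 - e) * x = x := by rw [sub_mul, one_mul, hex, sub_zero]
  have hkill : ∀ m, bm.l e (bm.r m (1 - e)) = 0 → bm.l x (bm.r m (1 - e)) = 0 :=
    fun m h ↦ hxe ▸ bm.l_r_mul_left_eq_zero h
  have h := hΔ.sandwich_eq_zero h₁ h₂ (1 - e) (1 - e)
  rw [add_mul, he.one_sub.eq, hxf, add_zero, mul_sub, he.one_sub_mul_self, hfx, zero_sub, sub_mul,
    he.mul_one_sub_self, hxf, sub_zero, mul_add, he.one_sub.eq, hfx, map_sub, map_add] at h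
  simp only [hkill _ hΔe, hkill _ hff, hkill _ hx, hΔ.peirce_ff_delta_self_eq_zero htf he,
    bm.r_add, bm.r_sub, bm.l_add, bm.l_sub, bm.add_l, bm.neg_l, bm.r_zero, bm.l_zero, neg_zero,
    add_zero, zero_sub] at h
  rw [← neg_add, neg_eq_zero] at h
  exact htf _ h

theorem delta_mul_mem_corner (hΔ : bm.JordanDerivableAtOrthogonal Δ)
    (hunit : ∀ x : M, bm.l 1 x = x ∧ bm.r x 1 = x) (htf : ∀ x : M, x + x = 0 → x = 0)
    {e x y w : A} (he : IsIdempotentElem e) (hΔe : bm.l e (bm.r (Δ e) (1 - e)) = 0)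
    (hxe : x * e = x) (hex : e * x = 0) (hyx : y * x = e) (hye : y * e = 0) (hew : e * w = w)
    (hwe : w * e = w) : Δ (x * w) ∈ bm.corner (1 - e) e := by
  have hff := hΔ.peirce_ef_delta_one_sub_eq_zero he hΔe
  have hxwe : x * w * e = x * w := by rw [mul_assoc, hwe]
  have hexw : e * (x * w) = 0 := by rw [← mul_assoc, hex, zero_mul]
  have hxw := hΔ.peirce_ef_delta_mul_eq_zero he hxe hex hew hwe hff
    (hΔ.peirce_ef_delta_eq_zero_of_left_inverse htf he hxe hex hyx hye)
    (hΔ.peirce_ef_delta_eq_zero_of_mem_ee he hff hew hwe)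
  exact bm.mem_corner_of_eq_zero hunit
    (hΔ.peirce_ee_delta_eq_zero_of_mem_fe htf he hxwe hexw hΔe hff hxw) hxw
    (hΔ.peirce_ff_delta_eq_zero_of_mem_fe htf he hxwe hexw hΔe hff hxw)

end JordanDerivableAtOrthogonal

end RingBimod

namespace RingBimod.JordanDerivableAtOrthogonal

open Matrix

variable {ι R M : Type*} [Fintype ι] [DecidableEq ι] [Ring R] [AddCommGroup M]
  {bm : RingBimod (Matrix ι ι R) M} {Δ : Matrix ι ι R →+ M}

theorem delta_single_mem_corner (hΔ : bm.JordanDerivableAtOrthogonal Δ)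
    (hunit : ∀ x : M, bm.l 1 x = x ∧ bm.r x 1 = x) (htf : ∀ x : M, x + x = 0 → x = 0) {i z : ι}
    (hiz : i ≠ z)
    (hΔE : bm.l (single z z 1) (bm.r (Δ (single z z 1)) (1 - single z z 1)) = 0) (c : R) :
    Δ (single i z c) ∈ bm.corner (1 - single z z 1) (single z z 1) := by
  have he : IsIdempotentElem (single z z (1 : R)) := by
    rw [IsIdempotentElem, single_mul_single_same, one_mul]
  have h := hΔ.delta_mul_mem_corner hunit htf he hΔE (x := single i z 1) (y := single z i 1)
    (w := single z z c) (by simp) (by simp [hiz.symm]) (by simp) (by simp [hiz]) (by simp)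
    (by simp)
  rwa [single_mul_single_same, one_mul] at h

theorem delta_mem_corner (hΔ : bm.JordanDerivableAtOrthogonal Δ)
    (hunit : ∀ x : M, bm.l 1 x = x ∧ bm.r x 1 = x) (htf : ∀ x : M, x + x = 0 → x = 0) (z : ι)
    (hΔE : bm.l (single z z 1) (bm.r (Δ (single z z 1)) (1 - single z z 1)) = 0)
    (X : Matrix ι ι R) :
    Δ ((1 - single z z 1) * X * single z z 1) ∈ bm.corner (1 - single z z 1) (single z z 1) := by
  rw [matrix_eq_sum_single ((1 - single z z 1) * X * single z z 1)]
  simp only [map_sum]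
  refine AddSubgroup.sum_mem _ fun i _ ↦ AddSubgroup.sum_mem _ fun j _ ↦ ?_
  obtain rfl | hjz := eq_or_ne j z
  · obtain rfl | hij := eq_or_ne i j
    · simp [Matrix.sub_mul]
    · exact hΔ.delta_single_mem_corner hunit htf hij hΔE _
  · rw [mul_single_apply_of_ne (hbj := hjz), single_zero, map_zero]
    exact zero_mem _

end RingBimod.JordanDerivableAtOrthogonal

theorem stmt6 (R : Type*) [Ring R] (n : ℕ) (hn : 2 ≤ n)
    (M : Type*) [AddCommGroup M] (bm : RingBimod (Matrix (Fin n) (Fin n) R) M)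
    (hunit : ∀ m : M, bm.l 1 m = m ∧ bm.r m 1 = m)
    (htf : ∀ m : M, m + m = 0 → m = 0)
    (Δ : Matrix (Fin n) (Fin n) R → M)
    (hadd : ∀ A B, Δ (A + B) = Δ A + Δ B)
    (hΔ : ∀ A B, A * B = 0 → B * A = 0 →
      bm.r (Δ A) B + bm.l A (Δ B) + bm.r (Δ B) A + bm.l B (Δ A) = 0)
    (E F : Matrix (Fin n) (Fin n) R)
    (hE : E = Matrix.single ⟨0, by omega⟩ ⟨0, by omega⟩ (1 : R))
    (hF : F = 1 - E)
    (hEF1 : bm.l E (bm.r (Δ E) F) = 0) :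
    ∀ A : Matrix (Fin n) (Fin n) R,
      Δ (F * A * E) = bm.l F (bm.r (Δ (F * A * E)) E) := by
  intro A
  subst hF hE
  have hΔ' : bm.JordanDerivableAtOrthogonal (AddMonoidHom.mk' Δ hadd) := hΔ
  exact (hΔ'.delta_mem_corner hunit htf _ hEF1 A).symm
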